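/- arXiv:1610.05869 — 3 statements merged into one kernel-verified Lean document; each statement's English description precedes it below -/
import Mathlib

section
/- Let N ≥ 1, n ≥ 0 and 0 < i ≤ N, and assume ℙ(A_N(n) = i) > 0 (equivalently p_i p̃_{N−i} > 0). Then the transition probabilities of the argmin chain from state i are ℙ(A_N(n+1) = N | A_N(n) = i) = 1 − p̃_{N+1−i}/p̃_{N−i} and ℙ(A_N(n+1) = i−1 | A_N(n) = i) = p̃_{N+1−i}/p̃_{N−i}; in particular the chain can only move from i to i−1 or to N. -/
open MeasureTheory ProbabilityTheory Finset
open scoped Classical ProbabilityTheory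

/-- Partial sums `S n = X 1 + ⋯ + X n` of the steps `X`. -/
noncomputable def walkSum {Ω : Type*} (X : ℕ → Ω → ℝ) (n : ℕ) (ω : Ω) : ℝ :=
  ∑ i ∈ Finset.range n, X (i + 1) ω

/-- The argmin chain: the last `i ∈ {0,…,N}` at which `S (n+i)` equals the minimum of the
walk over the window `{n, …, n+N}`. -/
noncomputable def argminChain {Ω : Type*} (X : ℕ → Ω → ℝ) (N n : ℕ) (ω : Ω) : ℕ :=
  ((Finset.range (N + 1)).filter
    (fun i => ∀ k ∈ Finset.range (N + 1), walkSum X (n + i) ω ≤ walkSum X (n + k) ω)).sup id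

/-- `p n = ℙ(S 1 ≥ 0, …, S n ≥ 0)`, as a real number. -/
noncomputable def stayNonneg {Ω : Type*} [MeasurableSpace Ω] (μ : MeasureTheory.Measure Ω)
    (X : ℕ → Ω → ℝ) (n : ℕ) : ℝ :=
  (μ {ω | ∀ k ∈ Finset.Icc 1 n, 0 ≤ walkSum X k ω}).toReal

/-- `p̃ n = ℙ(S 1 > 0, …, S n > 0)`, as a real number. -/
noncomputable def stayPos {Ω : Type*} [MeasurableSpace Ω] (μ : MeasureTheory.Measure Ω)
    (X : ℕ → Ω → ℝ) (n : ℕ) : ℝ :=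
  (μ {ω | ∀ k ∈ Finset.Icc 1 n, 0 < walkSum X k ω}).toReal

/-- Pochhammer symbol `(θ)_{n↑} = θ (θ+1) ⋯ (θ+n-1)`. -/
noncomputable def poch (θ : ℝ) (n : ℕ) : ℝ := ∏ i ∈ Finset.range n, (θ + i)


/-!
If `A_N(n) = i > 0`, the new window `{n+1, …, n+N+1}` still contains `n + i`, so the last
minimum stays at `n + i` (new state `i - 1`) when `S_{n+N+1} > S_{n+i}`, and moves to the new
endpoint (new state `N`) otherwise.

The event `{A_N(n) = i}` is the intersection of `{S_{n+i} ≤ S_{n+k} for k ≤ i}`, which depends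
only on `X_1, …, X_{n+i}`, with `{S_{n+i+k} > S_{n+i} for 1 ≤ k ≤ N - i}`, which depends only on
the later steps and, the steps being i.i.d., has probability `p̃_{N-i}`. Adding the condition
`S_{n+N+1} > S_{n+i}` lengthens the second event to `N + 1 - i` steps. By independence the first
factor cancels in the conditional probabilities.
-/

section Walk

variable {Ω : Type*} {X : ℕ → Ω → ℝ}

lemma walkSum_add (s k : ℕ) (ω : Ω) :
    walkSum X (s + k) ω = walkSum X s ω + walkSum (fun j => X (s + j)) k ω := by
  simp only [walkSum, sum_range_add, add_assoc]

lemma measurable_walkSum {mΩ : MeasurableSpace Ω} {k : ℕ}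
    (hX : ∀ j < k, Measurable (X (j + 1))) : Measurable (walkSum X k) :=
  Finset.measurable_sum _ fun j hj => hX j (mem_range.1 hj)

end Walk

lemma Finset.sup_id_eq_iff {α : Type*} [LinearOrder α] [OrderBot α] {s : Finset α}
    (hs : s.Nonempty) {i : α} :
    s.sup id = i ↔ i ∈ s ∧ ∀ j ∈ s, j ≤ i := by
  rw [← sup'_eq_sup hs, ← max'_eq_sup', max'_eq_iff]

section ArgminChain

variable {Ω : Type*} {X : ℕ → Ω → ℝ} {N n i : ℕ} {ω : Ω}

lemma argminChain_eq_iff :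
    argminChain X N n ω = i ↔
      i ≤ N ∧ (∀ k ≤ N, walkSum X (n + i) ω ≤ walkSum X (n + k) ω) ∧
        ∀ k ≤ N, i < k → walkSum X (n + i) ω < walkSum X (n + k) ω := by
  obtain ⟨a, ha, hmin⟩ := exists_min_image (range (N + 1)) (fun k => walkSum X (n + k) ω)
    nonempty_range_add_one
  rw [argminChain, sup_id_eq_iff ⟨a, by simp only [mem_filter]; exact ⟨ha, hmin⟩⟩]
  simp only [mem_filter, mem_range, Nat.lt_succ_iff]
  constructor
  · rintro ⟨⟨hiN, hi⟩, hmax⟩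
    refine ⟨hiN, hi, fun k hk hik => lt_of_not_ge fun hki => ?_⟩
    exact (hmax k ⟨hk, fun l hl => hki.trans (hi l hl)⟩).not_gt hik
  · rintro ⟨hiN, hi, hlt⟩
    refine ⟨⟨hiN, hi⟩, fun j ⟨hj, hjmin⟩ => le_of_not_gt fun hij => ?_⟩
    exact (hlt j hj hij).not_ge (hjmin i hiN)

lemma argminChain_succ (hi0 : 0 < i) (h : argminChain X N n ω = i) :
    argminChain X N (n + 1) ω =
      if walkSum X (n + i) ω < walkSum X (n + N + 1) ω then i - 1 else N := by
  obtain ⟨hiN, hmin, hlt⟩ := argminChain_eq_iff.1 h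
  have shift : ∀ k, n + 1 + k = n + (k + 1) := fun k => by omega
  split_ifs with hend
  · refine argminChain_eq_iff.2 ⟨by omega, fun k hk => ?_, fun k hk hik => ?_⟩ <;>
      rw [shift, shift, Nat.sub_add_cancel hi0] <;> rcases hk.lt_or_eq with hk | rfl
    · exact hmin _ hk
    · exact hend.le
    · exact hlt (k + 1) hk (by omega)
    · exact hend
  · refine argminChain_eq_iff.2 ⟨le_rfl, fun k hk => ?_, fun k hk hik => absurd hk hik.not_ge⟩
    rcases hk.lt_or_eq with hk | rfl
    · rw [shift, shift]
      exact (not_lt.1 hend).trans (hmin (k + 1) hk)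
    · exact le_rfl

end ArgminChain

section Events

variable {Ω : Type*} (X : ℕ → Ω → ℝ)

def minAtEndSet (s i : ℕ) : Set Ω :=
  {ω | ∀ k ≤ i, walkSum X (s + i) ω ≤ walkSum X (s + k) ω}

def stayPosSet (b : ℕ) : Set Ω :=
  {ω | ∀ k ∈ Icc 1 b, 0 < walkSum X k ω}

variable {X}

lemma measurableSet_minAtEndSet {mΩ : MeasurableSpace Ω} {s i : ℕ}
    (hX : ∀ j ≤ s + i, 0 < j → Measurable (X j)) : MeasurableSet (minAtEndSet X s i) := by
  have hS : ∀ k ≤ i, Measurable (walkSum X (s + k)) := fun k hk =>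
    measurable_walkSum fun j hj => hX (j + 1) (by omega) j.succ_pos
  simp only [minAtEndSet, Set.ofPred_forall]
  exact .iInter fun k => .iInter fun hk => measurableSet_le (hS i le_rfl) (hS k hk)

lemma measurableSet_stayPosSet {mΩ : MeasurableSpace Ω} {b : ℕ}
    (hX : ∀ j ≤ b, 0 < j → Measurable (X j)) : MeasurableSet (stayPosSet X b) := by
  simp only [stayPosSet, Set.ofPred_forall]
  refine .iInter fun k => .iInter fun hk => measurableSet_lt measurable_const ?_
  exact measurable_walkSum fun j hj => hX (j + 1) (by simp at hk; omega) j.succ_pos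

lemma mem_stayPosSet_shift_iff {s b : ℕ} {ω : Ω} :
    ω ∈ stayPosSet (fun j => X (s + j)) b ↔
      ∀ k ≤ b, 0 < k → walkSum X s ω < walkSum X (s + k) ω := by
  simp only [stayPosSet, Set.mem_ofPred_eq, mem_Icc, walkSum_add s]
  exact ⟨fun h k hkb hk => by linarith [h k ⟨hk, hkb⟩],
    fun h k hk => by linarith [h k hk.2 hk.1]⟩

end Events

section Decomposition

variable {Ω : Type*} {X : ℕ → Ω → ℝ} {N n i : ℕ}

lemma mem_minAtEndSet_inter_stayPosSet_iff {M : ℕ} (hiM : i ≤ M) {ω : Ω} :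
    ω ∈ minAtEndSet X n i ∩ stayPosSet (fun j => X (n + i + j)) (M - i) ↔
      (∀ k ≤ M, walkSum X (n + i) ω ≤ walkSum X (n + k) ω) ∧
        ∀ k ≤ M, i < k → walkSum X (n + i) ω < walkSum X (n + k) ω := by
  rw [Set.mem_inter_iff, mem_stayPosSet_shift_iff]
  have shift : ∀ k, i ≤ k → n + i + (k - i) = n + k := fun k hk => by omega
  constructor
  · rintro ⟨hmin, hrise⟩
    have hlt : ∀ k ≤ M, i < k → walkSum X (n + i) ω < walkSum X (n + k) ω :=
      fun k hk hik => by simpa only [shift k hik.le] using hrise (k - i) (by omega) (by omega)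
    exact ⟨fun k hk => (le_or_gt k i).elim (hmin k) fun hik => (hlt k hk hik).le, hlt⟩
  · rintro ⟨hmin, hlt⟩
    refine ⟨fun k hk => hmin k (by omega), fun k hk hk0 => ?_⟩
    simpa only [add_assoc] using hlt (i + k) (by omega) (by omega)

lemma setOf_argminChain_eq (hiN : i ≤ N) :
    {ω | argminChain X N n ω = i} =
      minAtEndSet X n i ∩ stayPosSet (fun j => X (n + i + j)) (N - i) := by
  ext ω
  rw [mem_minAtEndSet_inter_stayPosSet_iff hiN, Set.mem_ofPred_eq, argminChain_eq_iff]
  exact and_iff_right hiN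

lemma setOf_argminChain_eq_inter_lt (hiN : i ≤ N) :
    {ω | argminChain X N n ω = i} ∩ {ω | walkSum X (n + i) ω < walkSum X (n + N + 1) ω} =
      minAtEndSet X n i ∩ stayPosSet (fun j => X (n + i + j)) (N + 1 - i) := by
  ext ω
  rw [mem_minAtEndSet_inter_stayPosSet_iff (by omega), Set.mem_inter_iff, Set.mem_ofPred_eq,
    Set.mem_ofPred_eq, argminChain_eq_iff]
  simp only [Nat.le_succ_iff, or_imp, forall_and, forall_eq]
  constructor
  · rintro ⟨⟨-, hmin, hlt⟩, hend⟩
    exact ⟨⟨hmin, hend.le⟩, hlt, fun _ => hend⟩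
  · rintro ⟨⟨hmin, -⟩, hlt, hend⟩
    exact ⟨⟨hiN, hmin, hlt⟩, hend (by omega)⟩

lemma setOf_argminChain_inter_succ_eq_pred (hi0 : 0 < i) (hiN : i ≤ N) :
    {ω | argminChain X N n ω = i} ∩ {ω | argminChain X N (n + 1) ω = i - 1} =
      {ω | argminChain X N n ω = i} ∩
        {ω | walkSum X (n + i) ω < walkSum X (n + N + 1) ω} := by
  refine Set.ext fun ω => and_congr_right fun h => ?_
  simp only [Set.mem_ofPred_eq, argminChain_succ hi0 h]
  split_ifs with hlt <;> simp only [hlt, iff_false]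
  omega

lemma setOf_argminChain_inter_succ_eq_top (hi0 : 0 < i) (hiN : i ≤ N) :
    {ω | argminChain X N n ω = i} ∩ {ω | argminChain X N (n + 1) ω = N} =
      {ω | argminChain X N n ω = i} \
        {ω | walkSum X (n + i) ω < walkSum X (n + N + 1) ω} := by
  refine Set.ext fun ω => and_congr_right fun h => ?_
  simp only [Set.mem_ofPred_eq, argminChain_succ hi0 h]
  split_ifs with hlt <;> simp only [hlt, not_true_eq_false, not_false_eq_true, iff_false]
  omega

lemma setOf_argminChain_inter_succ_eq_empty (hi0 : 0 < i) {j : ℕ} (hj : j ≠ i - 1)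
    (hjN : j ≠ N) :
    {ω | argminChain X N n ω = i} ∩ {ω | argminChain X N (n + 1) ω = j} = ∅ := by
  refine Set.eq_empty_of_forall_notMem fun ω ⟨h, hsucc⟩ => ?_
  simp only [Set.mem_ofPred_eq, argminChain_succ hi0 h] at hsucc
  split_ifs at hsucc <;> omega

end Decomposition

section Probability

variable {Ω : Type*} [MeasurableSpace Ω] {μ : Measure Ω} {X : ℕ → Ω → ℝ}

lemma map_shift_eq_map (hmeas : ∀ k, Measurable (X k)) (hindep : iIndepFun X μ)
    (hident : ∀ k, IdentDistrib (X k) (X 1) μ μ) (s : ℕ) :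
    μ.map (fun ω k => X (s + k) ω) = μ.map (fun ω k => X k ω) := by
  rw [(hindep.precomp (add_right_injective s)).map_fun_eq_infinitePi_map fun k => hmeas _,
    hindep.map_fun_eq_infinitePi_map hmeas]
  congr 1
  funext k
  exact (hident _).map_eq.trans (hident k).map_eq.symm

lemma measure_stayPosSet_shift (hmeas : ∀ k, Measurable (X k)) (hindep : iIndepFun X μ)
    (hident : ∀ k, IdentDistrib (X k) (X 1) μ μ) (s b : ℕ) :
    μ (stayPosSet (fun j => X (s + j)) b) = μ (stayPosSet X b) := by
  have hpaths : MeasurableSet (stayPosSet (fun j (y : ℕ → ℝ) => y j) b) :=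
    measurableSet_stayPosSet fun j _ _ => measurable_pi_apply j
  -- both events are preimages of the same set of paths
  change μ ((fun ω k => X (s + k) ω) ⁻¹' stayPosSet (fun j (y : ℕ → ℝ) => y j) b) =
    μ ((fun ω k => X k ω) ⁻¹' stayPosSet (fun j (y : ℕ → ℝ) => y j) b)
  rw [← Measure.map_apply (measurable_pi_lambda _ fun k => hmeas _) hpaths,
    ← Measure.map_apply (measurable_pi_lambda _ hmeas) hpaths,
    map_shift_eq_map hmeas hindep hident]

lemma measure_minAtEndSet_inter_stayPosSet (hmeas : ∀ k, Measurable (X k))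
    (hindep : iIndepFun X μ) (n i b : ℕ) :
    μ (minAtEndSet X n i ∩ stayPosSet (fun j => X (n + i + j)) b) =
      μ (minAtEndSet X n i) * μ (stayPosSet (fun j => X (n + i + j)) b) := by
  have hX : ∀ S : Set ℕ, ∀ k ∈ S,
      Measurable[⨆ j ∈ S, MeasurableSpace.comap (X j) inferInstance] (X k) := fun S k hk =>
    measurable_iff_comap_le.2 (le_iSup₂ (f := fun j _ => MeasurableSpace.comap (X j) _) k hk)
  refine (Indep_iff _ _ _).1 (indep_iSup_of_disjoint (fun k => (hmeas k).comap_le) hindep.iIndep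
    (Set.Iic_disjoint_Ioi (le_refl (n + i)))) _ _ ?_ ?_
  · exact measurableSet_minAtEndSet fun j hj _ => hX _ j hj
  · exact measurableSet_stayPosSet fun j _ hj => hX _ (n + i + j) (by simpa using hj)

lemma measureReal_minAtEndSet_inter_stayPosSet (hmeas : ∀ k, Measurable (X k))
    (hindep : iIndepFun X μ) (hident : ∀ k, IdentDistrib (X k) (X 1) μ μ) (n i b : ℕ) :
    μ.real (minAtEndSet X n i ∩ stayPosSet (fun j => X (n + i + j)) b) =
      μ.real (minAtEndSet X n i) * stayPos μ X b := by
  rw [measureReal_def, measure_minAtEndSet_inter_stayPosSet hmeas hindep, ENNReal.toReal_mul,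
    measure_stayPosSet_shift hmeas hindep hident]
  rfl

end Probability

lemma toReal_cond_apply {Ω : Type*} [MeasurableSpace Ω] {μ : Measure Ω} {E : Set Ω}
    (hE : MeasurableSet E) (T : Set Ω) : (μ[|E] T).toReal = μ.real (E ∩ T) / μ.real E := by
  rw [cond_apply hE, ENNReal.toReal_mul, ENNReal.toReal_inv, inv_mul_eq_div]
  rfl

theorem argminChain_transition_from_pos_general
    {Ω : Type*} [MeasurableSpace Ω] (μ : MeasureTheory.Measure Ω) [IsProbabilityMeasure μ]
    (X : ℕ → Ω → ℝ) (hmeas : ∀ i, Measurable (X i))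
    (hindep : iIndepFun X μ)
    (hident : ∀ i, IdentDistrib (X i) (X 1) μ μ)
    (N : ℕ) (n i : ℕ) (hi0 : 0 < i) (hiN : i ≤ N)
    (hpos : 0 < μ {ω | argminChain X N n ω = i}) :
    ((μ[|{ω | argminChain X N n ω = i}]) {ω | argminChain X N (n + 1) ω = N}).toReal
        = 1 - stayPos μ X (N + 1 - i) / stayPos μ X (N - i)
    ∧ ((μ[|{ω | argminChain X N n ω = i}]) {ω | argminChain X N (n + 1) ω = i - 1}).toReal
        = stayPos μ X (N + 1 - i) / stayPos μ X (N - i)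
    ∧ ∀ j : ℕ, j ≠ i - 1 → j ≠ N →
        ((μ[|{ω | argminChain X N n ω = i}]) {ω | argminChain X N (n + 1) ω = j}).toReal = 0 := by
  set E := {ω | argminChain X N n ω = i}
  set L := {ω | walkSum X (n + i) ω < walkSum X (n + N + 1) ω}
  have hE : E = minAtEndSet X n i ∩ stayPosSet (fun j => X (n + i + j)) (N - i) :=
    setOf_argminChain_eq hiN
  have hEm : MeasurableSet E := hE ▸ (measurableSet_minAtEndSet fun j _ _ => hmeas j).inter
    (measurableSet_stayPosSet fun j _ _ => hmeas _)
  have hLm : MeasurableSet L :=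
    measurableSet_lt (measurable_walkSum fun j _ => hmeas _) (measurable_walkSum fun j _ => hmeas _)
  have hERe : μ.real E = μ.real (minAtEndSet X n i) * stayPos μ X (N - i) := by
    rw [hE, measureReal_minAtEndSet_inter_stayPosSet hmeas hindep hident]
  have hERpos : 0 < μ.real E := ENNReal.toReal_pos hpos.ne' (measure_ne_top μ E)
  have hratio :
      μ.real (E ∩ L) / μ.real E = stayPos μ X (N + 1 - i) / stayPos μ X (N - i) := by
    rw [setOf_argminChain_eq_inter_lt hiN, measureReal_minAtEndSet_inter_stayPosSet hmeas hindep
      hident, hERe, mul_div_mul_left _ _ (left_ne_zero_of_mul (hERe ▸ hERpos.ne'))]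
  refine ⟨?_, ?_, fun j hj hjN => ?_⟩
  · rw [toReal_cond_apply hEm, setOf_argminChain_inter_succ_eq_top hi0 hiN, ← hratio,
      eq_sub_iff_add_eq, ← add_div, add_comm, measureReal_inter_add_sdiff hLm,
      div_self hERpos.ne']
  · rw [toReal_cond_apply hEm, setOf_argminChain_inter_succ_eq_pred hi0 hiN, hratio]
  · rw [toReal_cond_apply hEm, setOf_argminChain_inter_succ_eq_empty hi0 hj hjN,
      measureReal_empty, zero_div]

/-- Transition probabilities of the argmin chain from a state `0 < i ≤ N`:
the chain moves to `N` with probability `1 - p̃_{N+1-i}/p̃_{N-i}`, to `i-1` with probability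
`p̃_{N+1-i}/p̃_{N-i}`, and to no other state. -/
theorem argminChain_transition_from_pos
    {Ω : Type*} [MeasurableSpace Ω] (μ : MeasureTheory.Measure Ω) [IsProbabilityMeasure μ]
    (X : ℕ → Ω → ℝ) (hmeas : ∀ i, Measurable (X i))
    (hindep : iIndepFun X μ)
    (hident : ∀ i, IdentDistrib (X i) (X 1) μ μ)
    (N : ℕ) (hN : 1 ≤ N) (n i : ℕ) (hi0 : 0 < i) (hiN : i ≤ N)
    (hpos : 0 < μ {ω | argminChain X N n ω = i}) :
    ((μ[|{ω | argminChain X N n ω = i}]) {ω | argminChain X N (n + 1) ω = N}).toReal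
        = 1 - stayPos μ X (N + 1 - i) / stayPos μ X (N - i)
    ∧ ((μ[|{ω | argminChain X N n ω = i}]) {ω | argminChain X N (n + 1) ω = i - 1}).toReal
        = stayPos μ X (N + 1 - i) / stayPos μ X (N - i)
    ∧ ∀ j : ℕ, j ≠ i - 1 → j ≠ N →
        ((μ[|{ω | argminChain X N n ω = i}]) {ω | argminChain X N (n + 1) ω = j}).toReal = 0 :=
  argminChain_transition_from_pos_general μ X hmeas hindep hident N n i hi0 hiN hpos
end

section
/- Let (S_n) be the simple symmetric random walk, i.e. the X_i are i.i.d. with ℙ(X_i = 1) = ℙ(X_i = −1) = 1/2. Then for every N ≥ 1 and n ≥ 0: (a) for 0 ≤ j < N, ℙ(A_N(n+1) = j | A_N(n) = 0) = 0 if j is odd, and ℙ(A_N(n+1) = j | A_N(n) = 0) = C(j, j/2) · C(2⌊N/2⌋ − j, ⌊N/2⌋ − j/2) / ( (j+2) · C(2⌊N/2⌋, ⌊N/2⌋) ) if j is even; and (b) ℙ(A_N(n+1) = N | A_N(n) = 0) = 1/(N+1) if N is odd, and = 2/(N+2) if N is even. Here C(a,b) denotes the binomial coefficient and ⌊x⌋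 the integer part of x. -/
open MeasureTheory ProbabilityTheory Finset
open scoped Classical ProbabilityTheory

open scoped ENNReal

/-!
Both events `A_N(n) = 0` and `A_N(n+1) = j` are determined by the `N + 1` steps
`X (n+1), …, X (n+N+1)`, and each of the `2 ^ (N+1)` sign patterns of these steps has the same
probability, so the conditional probability is a ratio of numbers of lattice paths of length
`N + 1`. In terms of the path `g` of partial sums started at `0`, `A_N(n) = 0` says that `g` is
positive at times `1, …, N`, and then `A_N(n+1) = j < N` says that `g` comes back to height `1`
at time `j + 1` and stays above `1` afterwards, while `A_N(n+1) = N` says that `g` ends at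
height at most `1`. So the paths split into a Dyck path of length `j` (a Catalan number) and a
positive path of length `N - j`. A positive path of length `k + 1` is an up-step followed by a
nonnegative path of length `k`; summing the ballot numbers `C(m, k) - C(m, k + a + 1)` of
nonnegative paths from `a` to `b` (where `m + b = a + 2k`) over the endpoint shows that there
are `C(k, ⌈k/2⌉)` of these.
-/

section LastArgmin

variable {α β : Type*} [LinearOrder α] [LinearOrder β]

noncomputable def argminSet (f : ℕ → α) (N : ℕ) : Finset ℕ :=
  (range (N + 1)).filter fun i => ∀ k ∈ range (N + 1), f i ≤ f k

noncomputable def lastArgmin (f : ℕ → α) (N : ℕ) : ℕ := (argminSet f N).sup id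

lemma mem_argminSet {f : ℕ → α} {N i : ℕ} :
    i ∈ argminSet f N ↔ i ≤ N ∧ ∀ k ≤ N, f i ≤ f k := by
  simp [argminSet]

lemma argminChain_eq_lastArgmin {Ω : Type*} (X : ℕ → Ω → ℝ) (N n : ℕ) (ω : Ω) :
    argminChain X N n ω = lastArgmin (fun i => walkSum X (n + i) ω) N := rfl

lemma le_lastArgmin {f : ℕ → α} {N k : ℕ} (hk : k ≤ N) (hmin : ∀ i ≤ N, f k ≤ f i) :
    k ≤ lastArgmin f N :=
  Finset.le_sup (f := id) (mem_argminSet.2 ⟨hk, hmin⟩)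

lemma lastArgmin_le_and_isMin (f : ℕ → α) (N : ℕ) :
    lastArgmin f N ≤ N ∧ ∀ i ≤ N, f (lastArgmin f N) ≤ f i := by
  obtain ⟨i, hi, hmin⟩ := (range (N + 1)).exists_min_image f nonempty_range_add_one
  obtain ⟨j, hj, hsup⟩ := (argminSet f N).exists_mem_eq_sup
    ⟨i, mem_argminSet.2 ⟨Nat.lt_succ_iff.1 (mem_range.1 hi),
      fun k hk => hmin k (mem_range.2 (Nat.lt_succ_of_le hk))⟩⟩ id
  rw [lastArgmin, hsup]
  exact mem_argminSet.1 hj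

theorem lastArgmin_eq_iff {f : ℕ → α} {N j : ℕ} :
    lastArgmin f N = j ↔
      j ≤ N ∧ (∀ k ≤ N, f j ≤ f k) ∧ ∀ k, j < k → k ≤ N → f j < f k := by
  obtain ⟨hle, hmin⟩ := lastArgmin_le_and_isMin f N
  constructor
  · rintro rfl
    refine ⟨hle, hmin, fun k hk hkN => lt_of_not_ge fun hkj => ?_⟩
    have := le_lastArgmin hkN fun i hi => hkj.trans (hmin i hi)
    omega
  · rintro ⟨hj, hjmin, hjlt⟩
    refine le_antisymm (not_lt.1 fun hjl => ?_) (le_lastArgmin hj hjmin)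
    exact (hjlt _ hjl hle).not_ge (hmin j hj)

lemma lastArgmin_congr {f : ℕ → α} {g : ℕ → β} {N : ℕ}
    (h : ∀ i ≤ N, ∀ k ≤ N, f i ≤ f k ↔ g i ≤ g k) :
    lastArgmin f N = lastArgmin g N := by
  obtain ⟨hle, hmin, hlt⟩ := lastArgmin_eq_iff.1 (rfl : lastArgmin f N = _)
  refine (lastArgmin_eq_iff.2
    ⟨hle, fun k hk => (h _ hle k hk).1 (hmin k hk), fun k hk hkN => ?_⟩).symm
  rw [lt_iff_not_ge, ← h k hkN _ hle, ← lt_iff_not_ge]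
  exact hlt k hk hkN

lemma lastArgmin_eq_zero_iff {f : ℕ → α} {N : ℕ} :
    lastArgmin f N = 0 ↔ ∀ i, 0 < i → i ≤ N → f 0 < f i := by
  rw [lastArgmin_eq_iff]
  exact ⟨fun h => h.2.2, fun h => ⟨N.zero_le, fun k hk => (Nat.eq_zero_or_pos k).elim
    (fun hk0 => hk0 ▸ le_rfl) fun hk0 => (h k hk0 hk).le, h⟩⟩

lemma lastArgmin_shift_eq_iff {g : ℕ → ℤ} {N j : ℕ} (hg1 : g 1 ≤ 1)
    (hpos : ∀ i, 0 < i → i ≤ N → 0 < g i) (hj : j ≤ N) :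
    lastArgmin (fun i => g (i + 1)) N = j ↔
      g (j + 1) ≤ 1 ∧ ∀ i, j < i → i ≤ N → 1 < g (i + 1) := by
  rw [lastArgmin_eq_iff]
  constructor
  · rintro ⟨-, hmin, hlt⟩
    refine ⟨(hmin 0 (Nat.zero_le _)).trans hg1, fun i hji hi => ?_⟩
    have := hpos (j + 1) (by omega) (by omega)
    have := hlt i hji hi
    omega
  · rintro ⟨hle, hgt⟩
    refine ⟨hj, fun k hk => ?_, fun k hjk hk => by have := hgt k hjk hk; omega⟩
    rcases lt_or_ge j k with hjk | hkj
    · have := hgt k hjk hk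
      omega
    · rcases eq_or_lt_of_le hkj with rfl | hkj
      · exact le_rfl
      · have := hpos (k + 1) (by omega) (by omega)
        omega

end LastArgmin

namespace LatticePath

def step (b : Bool) : ℤ := bif b then 1 else -1

lemma step_eq_one_or_neg_one (b : Bool) : step b = 1 ∨ step b = -1 := by cases b <;> simp [step]

def height {m : ℕ} (s : Fin m → Bool) (i : ℕ) : ℤ := (((List.ofFn s).take i).map step).sum

variable {m p q : ℕ}

@[simp] lemma height_zero (s : Fin m → Bool) : height s 0 = 0 := by simp [height]

lemma height_succ (s : Fin m → Bool) {i : ℕ} (hi : i < m) :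
    height s (i + 1) = height s i + step (s ⟨i, hi⟩) := by
  simp [height, List.take_add_one, hi]

lemma height_cons (c : Bool) (s : Fin m → Bool) (i : ℕ) :
    height (Fin.cons c s : Fin (m + 1) → Bool) (i + 1) = step c + height s i := by
  simp [height, List.ofFn_succ]

lemma height_append_of_le (x : Fin p → Bool) (y : Fin q → Bool) {i : ℕ} (hi : i ≤ p) :
    height (Fin.append x y) i = height x i := by
  simp [height, List.ofFn_fin_append, List.take_append, hi]

lemma height_append_add (x : Fin p → Bool) (y : Fin q → Bool) (i : ℕ) :
    height (Fin.append x y) (p + i) = height x p + height y i := by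
  simp [height, List.ofFn_fin_append, List.take_append, List.take_of_length_le]

lemma height_append_of_ge (x : Fin p → Bool) (y : Fin q → Bool) {i : ℕ} (hi : p ≤ i) :
    height (Fin.append x y) i = height x p + height y (i - p) := by
  rw [← height_append_add, Nat.add_sub_cancel' hi]

lemma abs_sum_map_step_le (l : List Bool) : |(l.map step).sum| ≤ l.length := by
  induction l with
  | nil => simp
  | cons b l ih =>
    simp only [List.map_cons, List.sum_cons, List.length_cons, Nat.cast_succ]
    cases b <;> simp only [step, cond_true, cond_false] <;> grind [abs_le]

lemma even_sum_map_step_add (l : List Bool) : Even ((l.map step).sum + l.length) := by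
  induction l with
  | nil => simp
  | cons b l ih =>
    obtain ⟨k, hk⟩ := ih
    simp only [List.map_cons, List.sum_cons, List.length_cons, Nat.cast_succ]
    cases b
    · exact ⟨k, by simp only [step, cond_false]; omega⟩
    · exact ⟨k + 1, by simp only [step, cond_true]; omega⟩

lemma abs_height_le (s : Fin m → Bool) (i : ℕ) : |height s i| ≤ i :=
  (abs_sum_map_step_le _).trans (by simp)

lemma height_one_le (s : Fin m → Bool) : height s 1 ≤ 1 := (abs_le.1 (abs_height_le s 1)).2

lemma even_height_add (s : Fin m → Bool) : Even (height s m + m) := by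
  simpa [height, List.take_of_length_le] using even_sum_map_step_add (List.ofFn s)

def consHeight (d : ℤ) (g : ℕ → ℤ) : ℕ → ℤ
  | 0 => 0
  | i + 1 => d + g i

lemma height_fin_cons (c : Bool) (s : Fin m → Bool) :
    height (Fin.cons c s : Fin (m + 1) → Bool) = consHeight (step c) (height s) := by
  funext i
  cases i with
  | zero => simp [consHeight]
  | succ i => simp [consHeight, height_cons]

lemma nonneg_consHeight_iff {g : ℕ → ℤ} {a d : ℤ} (ha : 0 ≤ a) :
    (∀ i ≤ m + 1, 0 ≤ a + consHeight d g i) ↔ ∀ i ≤ m, 0 ≤ a + d + g i := by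
  constructor
  · intro h i hi
    simpa [consHeight, add_assoc] using h (i + 1) (by omega)
  · rintro h (_ | i) hi
    · simpa [consHeight] using ha
    · simpa [consHeight, add_assoc] using h i (by omega)

noncomputable def count (m : ℕ) (Φ : (ℕ → ℤ) → Prop) : ℕ :=
  #{s : Fin m → Bool | Φ (height s)}

variable {Φ Ψ : (ℕ → ℤ) → Prop}

lemma count_congr (h : ∀ s : Fin m → Bool, Φ (height s) ↔ Ψ (height s)) :
    count m Φ = count m Ψ := by
  simp only [count, h]

lemma count_eq_zero (h : ∀ s : Fin m → Bool, ¬ Φ (height s)) : count m Φ = 0 := by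
  simpa [count, Finset.filter_eq_empty_iff] using h

lemma count_zero (Φ : (ℕ → ℤ) → Prop) : count 0 Φ = if Φ 0 then 1 else 0 := by
  have : ∀ s : Fin 0 → Bool, height s = 0 := fun s => funext fun i => by simp [height]
  by_cases h : Φ 0 <;> simp [count, this, h]

lemma count_succ (m : ℕ) (Φ : (ℕ → ℤ) → Prop) :
    count (m + 1) Φ
      = count m (fun g => Φ (consHeight 1 g)) + count m (fun g => Φ (consHeight (-1) g)) := by
  simp only [count, Finset.card_filter]
  rw [← (Fin.consEquiv fun _ => Bool).sum_comp, Fintype.sum_prod_type, Fintype.sum_bool]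
  simp [Fin.consEquiv, height_fin_cons, step]

lemma count_succ_of_not_down (h : ∀ s : Fin m → Bool, ¬ Φ (consHeight (-1) (height s))) :
    count (m + 1) Φ = count m (fun g => Φ (consHeight 1 g)) := by
  rw [count_succ, count_eq_zero (Φ := fun g => Φ (consHeight (-1) g)) h, add_zero]

lemma count_one (Φ : (ℕ → ℤ) → Prop) :
    count 1 Φ
      = (if Φ (consHeight 1 0) then 1 else 0) + (if Φ (consHeight (-1) 0) then 1 else 0) := by
  rw [count_succ, count_zero, count_zero]

lemma count_add (Φ Q R : (ℕ → ℤ) → Prop)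
    (h : ∀ (x : Fin p → Bool) (y : Fin q → Bool),
      Φ (height (Fin.append x y)) ↔ Q (height x) ∧ R (height y)) :
    count (p + q) Φ = count p Q * count q R := by
  rw [count, count, count, ← Finset.card_product]
  refine (Finset.card_equiv (Fin.appendEquiv p q) fun xy => ?_).symm
  simpa [Fin.appendEquiv] using (h xy.1 xy.2).symm

lemma count_or {A B : (ℕ → ℤ) → Prop}
    (hd : ∀ s : Fin m → Bool, ¬ (A (height s) ∧ B (height s))) :
    count m (fun g => A g ∨ B g) = count m A + count m B := by
  rw [count, count, count, ← Finset.card_union_of_disjoint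
    (Finset.disjoint_filter.2 fun s _ hA hB => hd s ⟨hA, hB⟩)]
  congr 1
  ext
  simp

lemma count_eq_sum_endpoint (h : ∀ s : Fin m → Bool, Φ (height s) → 0 ≤ height s m) :
    count m Φ = ∑ b ∈ range (m + 1), count m (fun g => Φ g ∧ g m = b) := by
  rw [count, Finset.card_eq_sum_card_fiberwise (f := fun s => (height s m).toNat)
    (t := range (m + 1))]
  · refine Finset.sum_congr rfl fun b _ => ?_
    rw [count, Finset.filter_filter]
    congr 1
    ext s
    simp only [Finset.mem_filter, Finset.mem_univ, true_and]
    constructor <;> rintro ⟨hΦ, hb⟩ <;> have := h s hΦ <;> exact ⟨hΦ, by omega⟩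
  · intro s hs
    have := abs_le.1 (abs_height_le s m)
    simp only [Finset.coe_filter, Finset.mem_univ, true_and, Set.mem_ofPred_eq] at hs
    simp only [Finset.coe_range, Set.mem_Iio]
    omega

noncomputable def nonnegCount (m a b : ℕ) : ℕ :=
  count m (fun g => (∀ i ≤ m, 0 ≤ (a : ℤ) + g i) ∧ (a : ℤ) + g m = b)

lemma nonnegCount_succ_zero (m b : ℕ) : nonnegCount (m + 1) 0 b = nonnegCount m 1 b := by
  rw [nonnegCount, count_succ_of_not_down]
  · refine count_congr fun s => ?_
    rw [nonneg_consHeight_iff (Nat.cast_nonneg _)]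
    simp [consHeight]
  · rintro s ⟨h, -⟩
    simpa [consHeight] using h 1 (by omega)

lemma nonnegCount_succ_succ (m a b : ℕ) :
    nonnegCount (m + 1) (a + 1) b = nonnegCount m (a + 2) b + nonnegCount m a b := by
  rw [nonnegCount, count_succ]
  congr 1 <;> refine count_congr fun s => ?_ <;>
    rw [nonneg_consHeight_iff (Nat.cast_nonneg (a + 1))] <;> simp only [consHeight] <;>
    push_cast <;> ring_nf

lemma nonnegCount_eq_zero_of_lt {m a b : ℕ} (h : m + b < a) : nonnegCount m a b = 0 :=
  count_eq_zero fun s ⟨_, hb⟩ => by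
    have := abs_le.1 (abs_height_le s m)
    omega

lemma nonnegCount_eq_zero_of_odd {m a b : ℕ} (h : Odd (m + a + b)) : nonnegCount m a b = 0 :=
  count_eq_zero fun s ⟨_, hb⟩ => by
    obtain ⟨k, hk⟩ := even_height_add s
    obtain ⟨l, hl⟩ := h
    omega

theorem nonnegCount_eq_choose_sub {m a b k : ℕ} (h : m + b = a + 2 * k) :
    (nonnegCount m a b : ℤ) = m.choose k - m.choose (k + a + 1) := by
  induction m generalizing a b k with
  | zero =>
    rw [nonnegCount, count_zero]
    rcases Nat.eq_zero_or_pos k with rfl | hk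
    · simp [show b = a by omega]
    · rw [if_neg fun ⟨_, hb⟩ => by simp only [Pi.zero_apply, add_zero] at hb; omega,
        Nat.choose_eq_zero_of_lt hk, Nat.choose_eq_zero_of_lt (by omega)]
      rfl
  | succ m ih =>
    rcases a with _ | a
    · obtain ⟨k, rfl⟩ : ∃ k', k = k' + 1 := ⟨k - 1, by omega⟩
      rw [nonnegCount_succ_zero, ih (k := k) (by omega)]
      simp only [Nat.choose_succ_succ]
      push_cast
      ring
    · rw [nonnegCount_succ_succ]
      rcases k with _ | k
      · rw [nonnegCount_eq_zero_of_lt (by omega), zero_add, ih (k := 0) (by omega)]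
        simp [Nat.choose_eq_zero_of_lt, show m < a + 1 by omega, show m + 1 < a + 1 + 1 by omega]
      · push_cast
        rw [ih (k := k) (by omega), ih (k := k + 1) (by omega)]
        simp only [Nat.choose_succ_succ, show k + 1 + (a + 1) + 1 = k + a + 2 + 1 by omega,
          show k + 1 + a + 1 = k + a + 1 + 1 by omega, show k + (a + 2) + 1 = k + a + 3 by omega]
        push_cast
        ring

lemma sum_range_nonnegCount (m B : ℕ) :
    ∑ b ∈ range B, (nonnegCount m 0 b : ℤ)
      = m.choose ((m + 1) / 2) - m.choose ((m + B + 1) / 2) := by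
  induction B with
  | zero => simp
  | succ B ih =>
    rw [Finset.sum_range_succ, ih]
    rcases Nat.even_or_odd (m + B) with ⟨k, hk⟩ | hodd
    · rw [nonnegCount_eq_choose_sub (k := k) (by omega), show (m + B + 1) / 2 = k by omega,
        show (m + (B + 1) + 1) / 2 = k + 0 + 1 by omega]
      ring
    · rw [nonnegCount_eq_zero_of_odd (by simpa using hodd),
        show (m + (B + 1) + 1) / 2 = (m + B + 1) / 2 by obtain ⟨k, hk⟩ := hodd; omega]
      ring

noncomputable def nonnegPathCount (m : ℕ) : ℕ := count m (fun g => ∀ i ≤ m, 0 ≤ g i)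

theorem nonnegPathCount_eq_choose (m : ℕ) : nonnegPathCount m = m.choose ((m + 1) / 2) := by
  have hsum : nonnegPathCount m = ∑ b ∈ range (m + 1), nonnegCount m 0 b := by
    rw [nonnegPathCount, count_eq_sum_endpoint fun s hs => hs m le_rfl]
    exact Finset.sum_congr rfl fun b _ => count_congr fun s => by simp
  have := sum_range_nonnegCount m (m + 1)
  rw [show (m + (m + 1) + 1) / 2 = m + 1 by omega, Nat.choose_succ_self] at this
  zify
  rw [hsum, Nat.cast_sum, this, Nat.cast_zero, sub_zero]

noncomputable def posPathCount (m : ℕ) : ℕ :=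
  count m (fun g => ∀ i, 0 < i → i ≤ m → 0 < g i)

lemma count_posPath_succ (Ψ : (ℕ → ℤ) → Prop) :
    count (m + 1) (fun g => (∀ i, 0 < i → i ≤ m + 1 → 0 < g i) ∧ Ψ g)
      = count m (fun g => (∀ i ≤ m, 0 ≤ g i) ∧ Ψ (consHeight 1 g)) := by
  rw [count_succ_of_not_down fun s ⟨h, _⟩ => by simpa [consHeight] using h 1 one_pos (by omega)]
  refine count_congr fun s => and_congr_left' ⟨fun h i hi => ?_, fun h i hi hi' => ?_⟩
  · simpa [consHeight, Int.lt_iff_add_one_le, add_comm] using h (i + 1) (by omega) (by omega)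
  · obtain ⟨i, rfl⟩ : ∃ i', i = i' + 1 := ⟨i - 1, by omega⟩
    simpa [consHeight, Int.lt_iff_add_one_le, add_comm] using h i (by omega)

lemma posPathCount_succ (m : ℕ) : posPathCount (m + 1) = nonnegPathCount m := by
  simpa [posPathCount, nonnegPathCount] using count_posPath_succ (m := m) fun _ => True

lemma posPathCount_pos (N : ℕ) : 0 < posPathCount N := by
  rcases N with _ | N
  · simp [posPathCount, count_zero, Nat.pos_iff_ne_zero]
  · rw [posPathCount_succ, nonnegPathCount_eq_choose]
    exact Nat.choose_pos (by omega)

lemma count_posPath_end_eq_nonnegCount (m b : ℕ) :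
    count (m + 1) (fun g => (∀ i, 0 < i → i ≤ m + 1 → 0 < g i) ∧ g (m + 1) = b + 1)
      = nonnegCount m 0 b := by
  rw [count_posPath_succ, nonnegCount]
  exact count_congr fun s => by simp [consHeight, add_comm]

lemma count_posPath_end_then_down {N : ℕ} (hN : 0 < N) (b : ℕ) :
    count (N + 1)
        (fun g => (∀ i, 0 < i → i ≤ N → 0 < g i) ∧ g N = b + 1 ∧ g (N + 1) = b)
      = nonnegCount (N - 1) 0 b := by
  obtain ⟨M, rfl⟩ : ∃ M, N = M + 1 := ⟨N - 1, by omega⟩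
  have hdown_count : count 1 (fun g => g 1 = -1) = 1 := by simp [count_one, consHeight]
  rw [Nat.add_sub_cancel, ← count_posPath_end_eq_nonnegCount, ← mul_one (count (M + 1) _)]
  refine (count_add (p := M + 1) (q := 1) _ _ _ fun x y => ?_).trans (by rw [hdown_count])
  rw [height_append_add x y 1, height_append_of_le x y le_rfl]
  constructor
  · rintro ⟨hpos, hend, hdown⟩
    refine ⟨⟨fun i hi hiM => ?_, hend⟩, by omega⟩
    simpa [height_append_of_le x y hiM] using hpos i hi hiM
  · rintro ⟨⟨hpos, hend⟩, hdown⟩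
    refine ⟨fun i hi hiM => ?_, hend, by omega⟩
    simpa [height_append_of_le x y hiM] using hpos i hi hiM

lemma centralBinom_succ_eq_two_mul_choose (n : ℕ) :
    (n + 1).centralBinom = 2 * (2 * n + 1).choose (n + 1) := by
  rw [Nat.centralBinom_eq_two_mul_choose, show 2 * (n + 1) = 2 * n + 1 + 1 by ring,
    Nat.choose_succ_succ, ← Nat.choose_symm_half]
  ring

lemma nonnegCount_two_mul_zero_zero (h : ℕ) : nonnegCount (2 * h) 0 0 = catalan h := by
  have hc := Nat.choose_succ_right_eq (2 * h) h
  rw [show 2 * h - h = h by omega] at hc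
  apply Nat.eq_of_mul_eq_mul_left h.succ_pos
  rw [succ_mul_catalan_eq_centralBinom, Nat.centralBinom_eq_two_mul_choose]
  zify at hc ⊢
  rw [nonnegCount_eq_choose_sub (k := h) (by omega)]
  linear_combination -hc

lemma nonnegCount_two_mul_add_one_zero_one (h : ℕ) :
    nonnegCount (2 * h + 1) 0 1 = catalan (h + 1) := by
  have hc := Nat.choose_succ_right_eq (2 * h + 1) (h + 1)
  rw [show 2 * h + 1 - (h + 1) = h by omega] at hc
  apply Nat.eq_of_mul_eq_mul_left (h + 1).succ_pos
  rw [succ_mul_catalan_eq_centralBinom, centralBinom_succ_eq_two_mul_choose]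
  zify at hc ⊢
  rw [nonnegCount_eq_choose_sub (k := h + 1) (by omega)]
  linear_combination -hc

lemma posPathCount_two_mul_add_one (M : ℕ) : posPathCount (2 * M + 1) = M.centralBinom := by
  rw [posPathCount_succ, nonnegPathCount_eq_choose, Nat.centralBinom_eq_two_mul_choose,
    show (2 * M + 1) / 2 = M by omega]

lemma two_mul_posPathCount_two_mul {M : ℕ} (hM : M ≠ 0) :
    2 * posPathCount (2 * M) = M.centralBinom := by
  obtain ⟨M, rfl⟩ := Nat.exists_eq_succ_of_ne_zero hM
  rw [show 2 * (M + 1) = 2 * M + 1 + 1 by ring, posPathCount_succ, nonnegPathCount_eq_choose,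
    centralBinom_succ_eq_two_mul_choose, show (2 * M + 1 + 1) / 2 = M + 1 by omega]

lemma posPathCount_sub_mul_centralBinom {N k : ℕ} (hk : 2 * k < N) :
    posPathCount (N - 2 * k) * (N / 2).centralBinom
      = posPathCount N * (N / 2 - k).centralBinom := by
  rcases Nat.even_or_odd' N with ⟨M, rfl | rfl⟩
  · rw [show 2 * M - 2 * k = 2 * (M - k) by omega, show 2 * M / 2 = M by omega,
      ← two_mul_posPathCount_two_mul (by omega), ← two_mul_posPathCount_two_mul (by omega)]
    ring
  · rw [show 2 * M + 1 - 2 * k = 2 * (M - k) + 1 by omega, show (2 * M + 1) / 2 = M by omega,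
      posPathCount_two_mul_add_one, posPathCount_two_mul_add_one, mul_comm]

lemma lastArgmin_height_eq_zero_iff (s : Fin m → Bool) (N : ℕ) :
    lastArgmin (height s) N = 0 ↔ ∀ i, 0 < i → i ≤ N → 0 < height s i := by
  simp [lastArgmin_eq_zero_iff]

theorem count_lastArgmin_eq_zero (N : ℕ) :
    count (N + 1) (fun g => lastArgmin g N = 0) = 2 * posPathCount N := by
  rw [count_add (Q := fun g => ∀ i, 0 < i → i ≤ N → 0 < g i) (R := fun _ => True), mul_comm]
  · simp [count_one, posPathCount]
  · intro x y
    simp only [lastArgmin_height_eq_zero_iff, and_true]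
    exact forall_congr' fun i => imp_congr_right fun _ => forall_congr' fun hi => by
      rw [height_append_of_le x y hi]

lemma lastArgmin_append_eq_iff {N j : ℕ} (hj : j < N) (x : Fin (j + 1) → Bool)
    (y : Fin (N - j) → Bool) :
    lastArgmin (height (Fin.append x y)) N = 0
        ∧ lastArgmin (fun i => height (Fin.append x y) (i + 1)) N = j
      ↔ ((∀ i, 0 < i → i ≤ j + 1 → 0 < height x i) ∧ height x (j + 1) = 1)
        ∧ ∀ i, 0 < i → i ≤ N - j → 0 < height y i := by
  rw [lastArgmin_height_eq_zero_iff]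
  have hx : ∀ i ≤ j + 1, height (Fin.append x y) i = height x i :=
    fun i hi => height_append_of_le x y hi
  have hy : ∀ i, j + 1 ≤ i →
      height (Fin.append x y) i = height x (j + 1) + height y (i - (j + 1)) :=
    fun i hi => height_append_of_ge x y hi
  constructor
  · rintro ⟨hpos, hlast⟩
    rw [lastArgmin_shift_eq_iff (height_one_le _) hpos hj.le] at hlast
    obtain ⟨hle, hgt⟩ := hlast
    have hxj : height x (j + 1) = 1 := by
      have := hpos (j + 1) (by omega) (by omega)
      rw [hx _ le_rfl] at this hle
      omega
    refine ⟨⟨fun i hi hij => ?_, hxj⟩, fun i hi hiN => ?_⟩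
    · simpa [hx i hij] using hpos i hi (by omega)
    · have := hgt (j + i) (by omega) (by omega)
      rw [hy _ (by omega), hxj, show j + i + 1 - (j + 1) = i by omega] at this
      omega
  · rintro ⟨⟨hxpos, hxj⟩, hypos⟩
    have hpos : ∀ i, 0 < i → i ≤ N → 0 < height (Fin.append x y) i := fun i hi hiN => by
      rcases le_or_gt i (j + 1) with hij | hij
      · simpa [hx i hij] using hxpos i hi hij
      · have := hypos (i - (j + 1)) (by omega) (by omega)
        rw [hy i hij.le, hxj]
        omega
    refine ⟨hpos, (lastArgmin_shift_eq_iff (height_one_le _) hpos hj.le).2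
      ⟨?_, fun i hji hiN => ?_⟩⟩
    · rw [hx _ le_rfl, hxj]
    · have := hypos (i - j) (by omega) (by omega)
      rw [hy _ (by omega), hxj, show i + 1 - (j + 1) = i - j by omega]
      omega

theorem count_transition_lt {N j : ℕ} (hj : j < N) :
    count (N + 1) (fun g => lastArgmin g N = 0 ∧ lastArgmin (fun i => g (i + 1)) N = j)
      = nonnegCount j 0 0 * posPathCount (N - j) := by
  rw [show N + 1 = (j + 1) + (N - j) by omega, ← count_posPath_end_eq_nonnegCount, posPathCount]
  exact count_add _ _ _ fun x y => (lastArgmin_append_eq_iff hj x y).trans (by simp)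

theorem count_transition_last {N : ℕ} (hN : 0 < N) :
    count (N + 1) (fun g => lastArgmin g N = 0 ∧ lastArgmin (fun i => g (i + 1)) N = N)
      = nonnegCount (N - 1) 0 0 + nonnegCount (N - 1) 0 1 := by
  rw [← count_posPath_end_then_down hN, ← count_posPath_end_then_down hN, ← count_or]
  · refine count_congr fun s => ?_
    rw [lastArgmin_height_eq_zero_iff]
    have hstep := height_succ s (Nat.lt_succ_self N)
    have := step_eq_one_or_neg_one (s ⟨N, Nat.lt_succ_self N⟩)
    constructor
    · rintro ⟨hpos, hlast⟩
      have := hpos N hN le_rfl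
      have := ((lastArgmin_shift_eq_iff (height_one_le s) hpos le_rfl).1 hlast).1
      have : (height s N = 1 ∧ height s (N + 1) = 0) ∨
          (height s N = 2 ∧ height s (N + 1) = 1) := by
        omega
      exact this.imp (fun h => ⟨hpos, by omega⟩) (fun h => ⟨hpos, by omega⟩)
    · rintro (⟨hpos, hend⟩ | ⟨hpos, hend⟩) <;>
      exact ⟨hpos, (lastArgmin_shift_eq_iff (height_one_le s) hpos le_rfl).2
        ⟨by omega, fun i hi hiN => by omega⟩⟩
  · rintro s ⟨⟨-, h0, -⟩, ⟨-, h1, -⟩⟩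
    omega

noncomputable def transitionRatio (N j : ℕ) : ℝ :=
  (count (N + 1) (fun g => lastArgmin g N = 0 ∧ lastArgmin (fun i => g (i + 1)) N = j) : ℝ)
    / count (N + 1) (fun g => lastArgmin g N = 0)

lemma transitionRatio_eq_zero_of_odd {N j : ℕ} (hj : j < N) (hodd : Odd j) :
    transitionRatio N j = 0 := by
  rw [transitionRatio, count_transition_lt hj, nonnegCount_eq_zero_of_odd (by simpa using hodd)]
  simp

lemma transitionRatio_of_even {N j : ℕ} (hj : j < N) (heven : Even j) :
    transitionRatio N j
      = (Nat.choose j (j / 2) : ℝ) * (Nat.choose (2 * (N / 2) - j) (N / 2 - j / 2) : ℝ)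
      / (((j : ℝ) + 2) * (Nat.choose (2 * (N / 2)) (N / 2) : ℝ)) := by
  obtain ⟨h, rfl⟩ : ∃ h, j = 2 * h := by obtain ⟨h, rfl⟩ := heven; exact ⟨h, by ring⟩
  have hcount : (posPathCount (N - 2 * h) : ℝ) * (N / 2).centralBinom
      = posPathCount N * (N / 2 - h).centralBinom := by
    exact_mod_cast posPathCount_sub_mul_centralBinom hj
  have hcat := succ_mul_catalan_eq_centralBinom h
  have hP := posPathCount_pos N
  have hC := Nat.centralBinom_pos (N / 2)
  rw [transitionRatio, count_transition_lt hj, count_lastArgmin_eq_zero,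
    nonnegCount_two_mul_zero_zero, show 2 * h / 2 = h by omega,
    show 2 * (N / 2) - 2 * h = 2 * (N / 2 - h) by omega, ← Nat.centralBinom_eq_two_mul_choose,
    ← Nat.centralBinom_eq_two_mul_choose, ← Nat.centralBinom_eq_two_mul_choose,
    div_eq_div_iff (by positivity) (by positivity)]
  rw [← hcat]
  push_cast
  linear_combination (2 * ((h : ℝ) + 1) * catalan h) * hcount

lemma transitionRatio_self_of_odd {N : ℕ} (hodd : Odd N) :
    transitionRatio N N = 1 / ((N : ℝ) + 1) := by
  obtain ⟨M, rfl⟩ := hodd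
  have hcat : 0 < catalan M := Nat.pos_of_mul_pos_left
    ((succ_mul_catalan_eq_centralBinom M).symm ▸ Nat.centralBinom_pos M)
  rw [transitionRatio, count_transition_last (by omega), count_lastArgmin_eq_zero,
    Nat.add_sub_cancel, nonnegCount_two_mul_zero_zero,
    nonnegCount_eq_zero_of_odd (by simp), posPathCount_two_mul_add_one,
    ← succ_mul_catalan_eq_centralBinom]
  push_cast
  field_simp
  ring

lemma transitionRatio_self_of_even {N : ℕ} (hN : 0 < N) (heven : Even N) :
    transitionRatio N N = 2 / ((N : ℝ) + 2) := by
  obtain ⟨M, rfl⟩ : ∃ M, N = 2 * M + 2 := by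
    obtain ⟨k, rfl⟩ := heven
    exact ⟨k - 1, by omega⟩
  have hcat : 0 < catalan (M + 1) := Nat.pos_of_mul_pos_left
    ((succ_mul_catalan_eq_centralBinom (M + 1)).symm ▸ Nat.centralBinom_pos (M + 1))
  rw [transitionRatio, count_transition_last hN, count_lastArgmin_eq_zero,
    show 2 * M + 2 - 1 = 2 * M + 1 by omega, nonnegCount_eq_zero_of_odd (by simp),
    nonnegCount_two_mul_add_one_zero_one, show 2 * M + 2 = 2 * (M + 1) by ring,
    two_mul_posPathCount_two_mul (by omega), ← succ_mul_catalan_eq_centralBinom]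
  push_cast
  field_simp
  ring

end LatticePath

open LatticePath

section StepAtoms

variable {Ω : Type*} (X : ℕ → Ω → ℝ)

def stepAtom (n : ℕ) {m : ℕ} (s : Fin m → Bool) : Set Ω :=
  {ω | ∀ t : Fin m, X (n + t + 1) ω = step (s t)}

variable {X} {m : ℕ}

lemma disjoint_stepAtom (n : ℕ) {s s' : Fin m → Bool} (h : s ≠ s') :
    Disjoint (stepAtom X n s) (stepAtom X n s') := by
  obtain ⟨t, ht⟩ := Function.ne_iff.1 h
  refine Set.disjoint_left.2 fun ω hω hω' => ht ?_
  have := (hω t).symm.trans (hω' t)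
  revert this
  cases s t <;> cases s' t <;> norm_num [step]

variable [MeasurableSpace Ω] (μ : Measure Ω)

lemma measurableSet_stepAtom (hmeas : ∀ i, Measurable (X i)) (n : ℕ) (s : Fin m → Bool) :
    MeasurableSet (stepAtom X n s) := by
  simp only [stepAtom, Set.ofPred_forall]
  exact MeasurableSet.iInter fun t => measurableSet_eq_fun (hmeas _) measurable_const

lemma measure_stepAtom (hindep : iIndepFun X μ)
    (hstep : ∀ i, μ {ω | X i ω = 1} = 1 / 2 ∧ μ {ω | X i ω = -1} = 1 / 2)
    (n : ℕ) (s : Fin m → Bool) : μ (stepAtom X n s) = 2⁻¹ ^ m := by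
  have hinj : Function.Injective fun t : Fin m => n + t + 1 := fun t t' h => by
    simpa [Fin.val_inj] using h
  have hatom : stepAtom X n s = ⋂ t ∈ (Finset.univ : Finset (Fin m)),
      X (n + t + 1) ⁻¹' {(step (s t) : ℝ)} := by
    ext ω
    simp [stepAtom]
  rw [hatom, (hindep.precomp hinj).measure_inter_preimage_eq_mul _ fun _ _ =>
    measurableSet_singleton _]
  rw [Finset.prod_eq_pow_card (b := 2⁻¹) fun t _ => ?_, Finset.card_univ, Fintype.card_fin]
  cases s t
  · simpa [step, Set.preimage] using (hstep _).2
  · simpa [step, Set.preimage] using (hstep _).1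

variable [IsProbabilityMeasure μ]

lemma measure_compl_iUnion_stepAtom (hmeas : ∀ i, Measurable (X i)) (hindep : iIndepFun X μ)
    (hstep : ∀ i, μ {ω | X i ω = 1} = 1 / 2 ∧ μ {ω | X i ω = -1} = 1 / 2) (n m : ℕ) :
    μ (⋃ s : Fin m → Bool, stepAtom X n s)ᶜ = 0 := by
  rw [prob_compl_eq_zero_iff (MeasurableSet.iUnion (measurableSet_stepAtom hmeas n)),
    measure_iUnion (fun s s' h => disjoint_stepAtom n h) (measurableSet_stepAtom hmeas n)]
  simp_rw [measure_stepAtom μ hindep hstep, tsum_fintype, Finset.sum_const, Finset.card_univ,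
    Fintype.card_fun, Fintype.card_bool, Fintype.card_fin, nsmul_eq_mul, Nat.cast_pow,
    Nat.cast_ofNat, ← mul_pow, ENNReal.mul_inv_cancel two_ne_zero ENNReal.ofNat_ne_top, one_pow]

theorem measure_eq_count_mul (hmeas : ∀ i, Measurable (X i)) (hindep : iIndepFun X μ)
    (hstep : ∀ i, μ {ω | X i ω = 1} = 1 / 2 ∧ μ {ω | X i ω = -1} = 1 / 2) {n : ℕ}
    {A : Set Ω} {Φ : (ℕ → ℤ) → Prop}
    (hA : ∀ s : Fin m → Bool, ∀ ω ∈ stepAtom X n s, ω ∈ A ↔ Φ (height s)) :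
    μ A = count m Φ * 2⁻¹ ^ m := by
  have hAU : A ∩ ⋃ s : Fin m → Bool, stepAtom X n s
      = ⋃ s ∈ ({s | Φ (height s)} : Finset (Fin m → Bool)), stepAtom X n s := by
    ext ω
    simp only [Set.mem_inter_iff, Set.mem_iUnion, Finset.mem_filter, Finset.mem_univ, true_and,
      exists_prop]
    exact ⟨fun ⟨hω, s, hs⟩ => ⟨s, (hA s ω hs).1 hω, hs⟩,
      fun ⟨s, hΦ, hs⟩ => ⟨(hA s ω hs).2 hΦ, s, hs⟩⟩
  rw [← measure_inter_conull (measure_compl_iUnion_stepAtom μ hmeas hindep hstep n m), hAU,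
    measure_biUnion_finset (fun s _ s' _ h => disjoint_stepAtom n h)
      fun s _ => measurableSet_stepAtom hmeas n s]
  simp [measure_stepAtom μ hindep hstep, count]

end StepAtoms

section Walk

variable {Ω : Type*} {X : ℕ → Ω → ℝ}

lemma walkSum_add_of_mem_stepAtom {n m : ℕ} {s : Fin m → Bool} {ω : Ω}
    (hω : ω ∈ stepAtom X n s) {i : ℕ} (hi : i ≤ m) :
    walkSum X (n + i) ω = walkSum X n ω + height s i := by
  induction i with
  | zero => simp
  | succ i ih =>
    rw [← add_assoc, walkSum, Finset.sum_range_succ, ← walkSum, ih (by omega),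
      hω ⟨i, by omega⟩, height_succ s (by omega)]
    push_cast
    ring

lemma argminChain_eq_of_mem_stepAtom {N n m d : ℕ} {s : Fin m → Bool} {ω : Ω}
    (hω : ω ∈ stepAtom X n s) (hd : N + d ≤ m) :
    argminChain X N (n + d) ω = lastArgmin (fun i => height s (i + d)) N := by
  rw [argminChain_eq_lastArgmin]
  refine lastArgmin_congr fun i hi k hk => ?_
  rw [add_assoc n, add_assoc n, add_comm d, add_comm d, walkSum_add_of_mem_stepAtom hω (by omega),
    walkSum_add_of_mem_stepAtom hω (by omega)]
  simp

lemma measurableSet_argminChain_eq [MeasurableSpace Ω] (hmeas : ∀ i, Measurable (X i))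
    (N n j : ℕ) :
    MeasurableSet {ω | argminChain X N n ω = j} := by
  have hS : ∀ i, Measurable (walkSum X i) := fun i =>
    Finset.measurable_sum _ fun k _ => hmeas (k + 1)
  simp only [argminChain_eq_lastArgmin, lastArgmin_eq_iff, Set.ofPred_and, Set.ofPred_forall]
  exact (MeasurableSet.const _).inter ((MeasurableSet.iInter fun k => MeasurableSet.iInter fun _ =>
    measurableSet_le (hS _) (hS _)).inter (MeasurableSet.iInter fun k => MeasurableSet.iInter
      fun _ => MeasurableSet.iInter fun _ => measurableSet_lt (hS _) (hS _)))

end Walk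

lemma cond_toReal_eq_div {Ω : Type*} [MeasurableSpace Ω] {μ : Measure Ω} {E F : Set Ω}
    (hE : MeasurableSet E) {a b : ℕ} {q : ℝ≥0∞} (hq0 : q ≠ 0) (hq : q ≠ ⊤)
    (hμE : μ E = a * q) (hμEF : μ (E ∩ F) = b * q) : (μ[|E] F).toReal = b / a := by
  have : q.toReal ≠ 0 := ENNReal.toReal_ne_zero.2 ⟨hq0, hq⟩
  rw [cond_apply hE, hμE, hμEF]
  simp only [ENNReal.toReal_mul, ENNReal.toReal_inv, ENNReal.toReal_natCast]
  field_simp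

theorem ssrw_argminChain_transition_from_zero_general
    {Ω : Type*} [MeasurableSpace Ω] (μ : MeasureTheory.Measure Ω) [IsProbabilityMeasure μ]
    (X : ℕ → Ω → ℝ) (hmeas : ∀ i, Measurable (X i))
    (hindep : iIndepFun X μ)
    (hstep : ∀ i, μ {ω | X i ω = 1} = 1 / 2 ∧ μ {ω | X i ω = -1} = 1 / 2)
    (N : ℕ) (hN : 1 ≤ N) (n : ℕ) :
    (∀ j : ℕ, j < N → Odd j →
      ((μ[|{ω | argminChain X N n ω = 0}]) {ω | argminChain X N (n + 1) ω = j}).toReal = 0)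
    ∧ (∀ j : ℕ, j < N → Even j →
      ((μ[|{ω | argminChain X N n ω = 0}]) {ω | argminChain X N (n + 1) ω = j}).toReal
        = (Nat.choose j (j / 2) : ℝ) * (Nat.choose (2 * (N / 2) - j) (N / 2 - j / 2) : ℝ)
            / (((j : ℝ) + 2) * (Nat.choose (2 * (N / 2)) (N / 2) : ℝ)))
    ∧ (Odd N →
      ((μ[|{ω | argminChain X N n ω = 0}]) {ω | argminChain X N (n + 1) ω = N}).toReal
        = 1 / ((N : ℝ) + 1))
    ∧ (Even N →
      ((μ[|{ω | argminChain X N n ω = 0}]) {ω | argminChain X N (n + 1) ω = N}).toReal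
        = 2 / ((N : ℝ) + 2)) := by
  have hatom : ∀ (s : Fin (N + 1) → Bool), ∀ ω ∈ stepAtom X n s,
      argminChain X N n ω = lastArgmin (height s) N
        ∧ argminChain X N (n + 1) ω = lastArgmin (fun i => height s (i + 1)) N :=
    fun s ω hω => ⟨by simpa using argminChain_eq_of_mem_stepAtom (d := 0) hω (by omega),
      argminChain_eq_of_mem_stepAtom hω le_rfl⟩
  have hprob : ∀ j, ((μ[|{ω | argminChain X N n ω = 0}])
      {ω | argminChain X N (n + 1) ω = j}).toReal = transitionRatio N j := fun j =>
    cond_toReal_eq_div (measurableSet_argminChain_eq hmeas N n 0) (by simp) (by simp)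
      (measure_eq_count_mul μ hmeas hindep hstep (n := n) fun s ω hω => by
        simp [(hatom s ω hω).1])
      (measure_eq_count_mul μ hmeas hindep hstep (n := n) fun s ω hω => by
        simp [hatom s ω hω])
  simp only [hprob]
  exact ⟨fun j hj => transitionRatio_eq_zero_of_odd hj, fun j hj => transitionRatio_of_even hj,
    transitionRatio_self_of_odd, transitionRatio_self_of_even hN⟩

/-- For the simple symmetric random walk, transition probabilities of the argmin chain from
the state `0`: to `j < N` the probability vanishes for odd `j` and equals
`C(j,j/2) C(2⌊N/2⌋-j, ⌊N/2⌋-j/2) / ((j+2) C(2⌊N/2⌋, ⌊N/2⌋))` for even `j`; to `N` it equals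
`1/(N+1)` for odd `N` and `2/(N+2)` for even `N`. -/
theorem ssrw_argminChain_transition_from_zero
    {Ω : Type*} [MeasurableSpace Ω] (μ : MeasureTheory.Measure Ω) [IsProbabilityMeasure μ]
    (X : ℕ → Ω → ℝ) (hmeas : ∀ i, Measurable (X i))
    (hindep : iIndepFun X μ)
    (hident : ∀ i, IdentDistrib (X i) (X 1) μ μ)
    (hstep : ∀ i, μ {ω | X i ω = 1} = 1 / 2 ∧ μ {ω | X i ω = -1} = 1 / 2)
    (N : ℕ) (hN : 1 ≤ N) (n : ℕ) :
    (∀ j : ℕ, j < N → Odd j →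
      ((μ[|{ω | argminChain X N n ω = 0}]) {ω | argminChain X N (n + 1) ω = j}).toReal = 0)
    ∧ (∀ j : ℕ, j < N → Even j →
      ((μ[|{ω | argminChain X N n ω = 0}]) {ω | argminChain X N (n + 1) ω = j}).toReal
        = (Nat.choose j (j / 2) : ℝ) * (Nat.choose (2 * (N / 2) - j) (N / 2 - j / 2) : ℝ)
            / (((j : ℝ) + 2) * (Nat.choose (2 * (N / 2)) (N / 2) : ℝ)))
    ∧ (Odd N →
      ((μ[|{ω | argminChain X N n ω = 0}]) {ω | argminChain X N (n + 1) ω = N}).toReal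
        = 1 / ((N : ℝ) + 1))
    ∧ (Even N →
      ((μ[|{ω | argminChain X N n ω = 0}]) {ω | argminChain X N (n + 1) ω = N}).toReal
        = 2 / ((N : ℝ) + 2)) :=
  ssrw_argminChain_transition_from_zero_general μ X hmeas hindep hstep N hN n
end

section
/- Define sequences of real numbers by p_0 := 1, p_{2n−1} = p_{2n} := (1/2)_{n↑}/n! for n ≥ 1, and p̃_0 := 1, p̃_{2n} = p̃_{2n+1} := (1/2)_{n↑}/(2 · n!) for n ≥ 1 (so p̃_1 = 1/2). Then for every N ≥ 1, Σ_{j=0}^{N−1} p_j p̃_{N−j} − Σ_{j=0}^{N−1} p_{j+1} p̃_{N−j} = (N/(N+1)) p̃_N if N is odd, and = (N/(N+2)) p̃_N if N is even. -/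
open MeasureTheory ProbabilityTheory Finset
open scoped Classical ProbabilityTheory

/-!
Write `q n = (1/2)_{n↑} / n!`, so that `p (2m-1) = p (2m) = q m` and `p̃ (2k) = p̃ (2k+1) = q k / 2`.
Then `p j - p (j+1)` vanishes for odd `j`, and the sum collapses to
`½ Σ_m (q m - q (m+1)) q (⌊N/2⌋ - m)`. The Chu–Vandermonde identity for rising factorials gives
`Σ_{i+j=n} q i q j = (1)_{n↑} / n! = 1`, which evaluates this as `q (K+1)` for `N = 2K+1` and as
`2 q (K+1) - q K` for `N = 2K`; the recursion `q (K+1) = q K (K + 1/2) / (K+1)` finishes.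
-/

open Polynomial

lemma poch_zero_right (θ : ℝ) : poch θ 0 = 1 := prod_range_zero _

lemma poch_succ (θ : ℝ) (n : ℕ) : poch θ (n + 1) = poch θ n * (θ + n) := prod_range_succ _ _

lemma poch_one_left (n : ℕ) : poch 1 n = n.factorial := by
  rw [poch, ← prod_range_add_one_eq_factorial]
  push_cast
  exact prod_congr rfl fun i _ => add_comm _ _

lemma poch_eq_neg_one_pow_mul_smeval (θ : ℝ) (n : ℕ) :
    poch θ n = (-1) ^ n * (descPochhammer ℤ n).smeval (-θ) := by
  have neg_one_pow : ((-1) ^ n : ℝ) = ∏ _ ∈ range n, (-1) := by simp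
  rw [← aeval_eq_smeval, aeval_def, ← eval_map, descPochhammer_map,
    descPochhammer_eval_eq_prod_range, poch, neg_one_pow, ← prod_mul_distrib]
  exact prod_congr rfl fun i _ => by ring

lemma poch_add (a b : ℝ) (k : ℕ) :
    poch (a + b) k = ∑ ij ∈ antidiagonal k, k.choose ij.1 * (poch a ij.1 * poch b ij.2) := by
  rw [poch_eq_neg_one_pow_mul_smeval, neg_add,
    Ring.descPochhammer_smeval_add _ (Commute.all _ _), mul_sum]
  refine sum_congr rfl fun ij hij => ?_
  rw [poch_eq_neg_one_pow_mul_smeval, poch_eq_neg_one_pow_mul_smeval,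
    ← HasAntidiagonal.mem_antidiagonal.mp hij, pow_add]
  ring

noncomputable def pochDivFactorial (θ : ℝ) (n : ℕ) : ℝ := poch θ n / n.factorial

lemma pochDivFactorial_zero_right (θ : ℝ) : pochDivFactorial θ 0 = 1 := by
  simp [pochDivFactorial, poch_zero_right]

lemma pochDivFactorial_succ (θ : ℝ) (n : ℕ) :
    pochDivFactorial θ (n + 1) = pochDivFactorial θ n * (θ + n) / (n + 1) := by
  rw [pochDivFactorial, pochDivFactorial, poch_succ, Nat.factorial_succ]
  push_cast
  field_simp

lemma pochDivFactorial_one_left (n : ℕ) : pochDivFactorial 1 n = 1 := by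
  simp [pochDivFactorial, poch_one_left, Nat.factorial_ne_zero]

lemma sum_antidiagonal_pochDivFactorial (a b : ℝ) (k : ℕ) :
    ∑ ij ∈ antidiagonal k, pochDivFactorial a ij.1 * pochDivFactorial b ij.2
      = pochDivFactorial (a + b) k := by
  rw [pochDivFactorial, poch_add, sum_div]
  refine sum_congr rfl fun ij hij => ?_
  obtain ⟨i, j⟩ := ij
  rw [← HasAntidiagonal.mem_antidiagonal.mp hij, Nat.choose_symm_add,
    ← Nat.add_choose_mul_factorial_mul_factorial i j]
  have hchoose : ((i + j).choose j : ℝ) ≠ 0 := mod_cast (Nat.choose_pos le_add_self).ne'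
  simp only [pochDivFactorial]
  push_cast
  field_simp

lemma sum_range_pochDivFactorial_sub_succ_mul {a b : ℝ} (hab : a + b = 1) (K : ℕ) :
    ∑ m ∈ range (K + 1), (pochDivFactorial a m - pochDivFactorial a (m + 1))
      * pochDivFactorial b (K - m) = pochDivFactorial b (K + 1) := by
  have conv (n : ℕ) :
      ∑ m ∈ range (n + 1), pochDivFactorial a m * pochDivFactorial b (n - m) = 1 := by
    rw [← Nat.sum_antidiagonal_eq_sum_range_succ
        (fun i j => pochDivFactorial a i * pochDivFactorial b j),
      sum_antidiagonal_pochDivFactorial, hab, pochDivFactorial_one_left]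
  have shifted := conv (K + 1)
  rw [sum_range_succ'] at shifted
  simp only [Nat.add_sub_add_right, Nat.sub_zero, pochDivFactorial_zero_right, one_mul] at shifted
  simp only [sub_mul, sum_sub_distrib, conv K]
  linarith

lemma sum_range_eq_sum_range_even {M : Type*} [AddCommMonoid M] (f : ℕ → M)
    (hf : ∀ m, f (2 * m + 1) = 0) (N : ℕ) :
    ∑ j ∈ range N, f j = ∑ m ∈ range ((N + 1) / 2), f (2 * m) := by
  induction N with
  | zero => simp
  | succ N ih =>
    rw [sum_range_succ, ih]
    obtain ⟨m, rfl | rfl⟩ := Nat.even_or_odd' N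
    · rw [show (2 * m + 1 + 1) / 2 = (2 * m + 1) / 2 + 1 by omega, sum_range_succ,
        show (2 * m + 1) / 2 = m by omega]
    · rw [hf, add_zero, show (2 * m + 1 + 1 + 1) / 2 = (2 * m + 1 + 1) / 2 by omega]

section HalfPoch

local notation "q" => pochDivFactorial (1 / 2)

noncomputable def nonnegProb (n : ℕ) : ℝ := q ((n + 1) / 2)

/-- Agrees with `p̃ n` only for `n ≥ 1`: at `0` it is `1 / 2`, not `1`. -/
noncomputable def posProb (n : ℕ) : ℝ := q (n / 2) / 2

lemma nonnegProb_two_mul (m : ℕ) : nonnegProb (2 * m) = q m := by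
  rw [nonnegProb, show (2 * m + 1) / 2 = m by omega]

lemma nonnegProb_two_mul_add_one (m : ℕ) : nonnegProb (2 * m + 1) = q (m + 1) := by
  rw [nonnegProb, show (2 * m + 1 + 1) / 2 = m + 1 by omega]

lemma sum_range_nonnegProb_sub_mul (N : ℕ) :
    ∑ j ∈ range N, (nonnegProb j - nonnegProb (j + 1)) * posProb (N - j)
      = ∑ m ∈ range ((N + 1) / 2), (q m - q (m + 1)) * q (N / 2 - m) / 2 := by
  rw [sum_range_eq_sum_range_even]
  · refine sum_congr rfl fun m hm => ?_
    rw [nonnegProb_two_mul, nonnegProb_two_mul_add_one, posProb,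
      show (N - 2 * m) / 2 = N / 2 - m by omega, mul_div_assoc]
  · intro m
    rw [nonnegProb_two_mul_add_one, show 2 * m + 1 + 1 = 2 * (m + 1) by ring,
      nonnegProb_two_mul, sub_self, zero_mul]

lemma sum_range_nonnegProb_sub_mul_of_even (K : ℕ) :
    ∑ j ∈ range (2 * K), (nonnegProb j - nonnegProb (j + 1)) * posProb (2 * K - j)
      = 2 * K / (2 * K + 2) * posProb (2 * K) := by
  have hsum := sum_range_pochDivFactorial_sub_succ_mul (a := 1 / 2) (b := 1 / 2) (by norm_num) K
  rw [sum_range_succ, Nat.sub_self, pochDivFactorial_zero_right] at hsum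
  rw [sum_range_nonnegProb_sub_mul, show (2 * K + 1) / 2 = K by omega,
    show 2 * K / 2 = K by omega, ← sum_div, eq_sub_of_add_eq hsum, posProb,
    show 2 * K / 2 = K by omega, pochDivFactorial_succ]
  field_simp
  ring

lemma sum_range_nonnegProb_sub_mul_of_odd (K : ℕ) :
    ∑ j ∈ range (2 * K + 1), (nonnegProb j - nonnegProb (j + 1)) * posProb (2 * K + 1 - j)
      = (2 * K + 1) / (2 * K + 1 + 1) * posProb (2 * K + 1) := by
  rw [sum_range_nonnegProb_sub_mul, show (2 * K + 1 + 1) / 2 = K + 1 by omega,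
    show (2 * K + 1) / 2 = K by omega, ← sum_div,
    sum_range_pochDivFactorial_sub_succ_mul (by norm_num), posProb,
    show (2 * K + 1) / 2 = K by omega, pochDivFactorial_succ]
  field_simp
  ring

end HalfPoch

theorem ssrw_sum_identity_general (p ptil : ℕ → ℝ)
    (hp0 : p 0 = 1)
    (hp : ∀ n : ℕ, 1 ≤ n →
      p (2 * n - 1) = poch (1 / 2) n / Nat.factorial n
      ∧ p (2 * n) = poch (1 / 2) n / Nat.factorial n)
    (hptil1 : ptil 1 = 1 / 2)
    (hptil : ∀ n : ℕ, 1 ≤ n →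
      ptil (2 * n) = poch (1 / 2) n / (2 * Nat.factorial n)
      ∧ ptil (2 * n + 1) = poch (1 / 2) n / (2 * Nat.factorial n))
    (N : ℕ) (hN : 1 ≤ N) :
    (∑ j ∈ Finset.range N, p j * ptil (N - j)) - ∑ j ∈ Finset.range N, p (j + 1) * ptil (N - j)
      = if Odd N then (N : ℝ) / ((N : ℝ) + 1) * ptil N
        else (N : ℝ) / ((N : ℝ) + 2) * ptil N := by
  have hp_eq (n : ℕ) : p n = nonnegProb n := by
    obtain ⟨m, rfl | rfl⟩ := Nat.even_or_odd' n
    · rcases m.eq_zero_or_pos with rfl | hm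
      · rw [nonnegProb_two_mul, pochDivFactorial_zero_right, mul_zero, hp0]
      · rw [nonnegProb_two_mul, (hp m hm).2, pochDivFactorial]
    · rw [nonnegProb_two_mul_add_one, show 2 * m + 1 = 2 * (m + 1) - 1 by omega,
        (hp (m + 1) (by omega)).1, pochDivFactorial]
  have hptil_eq (n : ℕ) (hn : 1 ≤ n) : ptil n = posProb n := by
    obtain ⟨m, rfl | rfl⟩ := Nat.even_or_odd' n
    · rw [(hptil m (by omega)).1, posProb, pochDivFactorial, Nat.mul_div_cancel_left m two_pos,
        div_div, mul_comm]
    · rcases m.eq_zero_or_pos with rfl | hm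
      · rw [hptil1, posProb, pochDivFactorial_zero_right]
      · rw [(hptil m hm).2, posProb, pochDivFactorial, show (2 * m + 1) / 2 = m by omega,
          div_div, mul_comm]
  have hsum : (∑ j ∈ range N, p j * ptil (N - j)) - ∑ j ∈ range N, p (j + 1) * ptil (N - j)
      = ∑ j ∈ range N, (nonnegProb j - nonnegProb (j + 1)) * posProb (N - j) := by
    rw [← sum_sub_distrib]
    refine sum_congr rfl fun j hj => ?_
    rw [hp_eq, hp_eq, hptil_eq _ (by simp at hj; omega), sub_mul]
  rw [hsum, hptil_eq N hN]
  obtain ⟨K, rfl | rfl⟩ := Nat.even_or_odd' N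
  · rw [if_neg (Nat.not_odd_iff_even.2 (even_two_mul K)), sum_range_nonnegProb_sub_mul_of_even]
    norm_cast
  · rw [if_pos (odd_two_mul_add_one K), sum_range_nonnegProb_sub_mul_of_odd]
    norm_cast

/-- The algebraic identity behind Lemma 2.4: with `p_0 = 1`, `p_{2n-1} = p_{2n} = (1/2)_{n↑}/n!`
and `p̃_0 = 1`, `p̃_1 = 1/2`, `p̃_{2n} = p̃_{2n+1} = (1/2)_{n↑}/(2 n!)`, for every `N ≥ 1`,
`Σ_{j=0}^{N-1} p_j p̃_{N-j} - Σ_{j=0}^{N-1} p_{j+1} p̃_{N-j}` equals `(N/(N+1)) p̃_N` for odd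
`N` and `(N/(N+2)) p̃_N` for even `N`. -/
theorem ssrw_sum_identity (p ptil : ℕ → ℝ)
    (hp0 : p 0 = 1)
    (hp : ∀ n : ℕ, 1 ≤ n →
      p (2 * n - 1) = poch (1 / 2) n / Nat.factorial n
      ∧ p (2 * n) = poch (1 / 2) n / Nat.factorial n)
    (hptil0 : ptil 0 = 1) (hptil1 : ptil 1 = 1 / 2)
    (hptil : ∀ n : ℕ, 1 ≤ n →
      ptil (2 * n) = poch (1 / 2) n / (2 * Nat.factorial n)
      ∧ ptil (2 * n + 1) = poch (1 / 2) n / (2 * Nat.factorial n))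
    (N : ℕ) (hN : 1 ≤ N) :
    (∑ j ∈ Finset.range N, p j * ptil (N - j)) - ∑ j ∈ Finset.range N, p (j + 1) * ptil (N - j)
      = if Odd N then (N : ℝ) / ((N : ℝ) + 1) * ptil N
        else (N : ℝ) / ((N : ℝ) + 2) * ptil N :=
  ssrw_sum_identity_general p ptil hp0 hp hptil1 hptil N hN
end
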